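/- arXiv:2601.15194 — 4 statements merged into one kernel-verified Lean document; each statement's English description precedes it below -/
import Mathlib

section
/- For all x in [0,1], the binary entropy function satisfies (4 log 2)·x(1−x) ≤ h₂(x) ≤ (e log 2)·(x(1−x))^{1/log 4}, where h₂(x) = −x log x − (1−x) log(1−x) (with natural logarithm and h₂(0)=h₂(1)=0). -/
noncomputable def binEnt (x : ℝ) : ℝ := -(x * Real.log x) - (1 - x) * Real.log (1 - x)

/-!
Both bounds are invariant under `x ↦ 1 - x`, so it suffices to prove them on `[0, 1/2]`.

For the lower bound, `g = h₂ - 4 log 2 · x(1-x)` vanishes at `0` and `1/2`, and so does `g'`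
at `1/2`. Its second derivative `8 log 2 - 1/(x(1-x))` changes sign once, from negative to
positive; hence `g'` is first nonnegative and then nonpositive, and `g` is bounded below by
`min (g 0) (g (1/2)) = 0`.

For the upper bound, `log h₂ - log (x(1-x)) / log 4` is increasing on `(0, 1/2]`, and its value at
`1/2` is `log (log 2) + 1`, which produces the factor `e`. Its derivative is nonnegative iff
`K = log 4 · x(1-x) log((1-x)/x) - (1-2x) h₂ ≥ 0`, and `K` is handled exactly like `g`: the sign
pattern of `K''` comes from the monotonicity of `x(1-x) log((1-x)/x) / (1-2x)`, which rests on
`log((1-x)/x) ≥ 2(1-2x)`, the first term of the series of `artanh`.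
-/

open Real Set

def NonnegThenNonposOn (φ : ℝ → ℝ) (s : Set ℝ) : Prop :=
  ∀ x ∈ s, ∀ y ∈ s, x ≤ y → φ x < 0 → φ y ≤ 0

def NonposThenNonnegOn (φ : ℝ → ℝ) (s : Set ℝ) : Prop :=
  ∀ x ∈ s, ∀ y ∈ s, x ≤ y → 0 < φ x → 0 ≤ φ y

section SignChange

variable {f f' f'' : ℝ → ℝ} {a b : ℝ}

lemma NonnegThenNonposOn.min_le (h : NonnegThenNonposOn f' (Ioo a b))
    (hf : ContinuousOn f (Icc a b)) (hf' : ∀ x ∈ Ioo a b, HasDerivAt f (f' x) x)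
    {x : ℝ} (hx : x ∈ Icc a b) : min (f a) (f b) ≤ f x := by
  by_cases hneg : ∃ s ∈ Ioo a x, f' s < 0
  · obtain ⟨s, hs, hs_neg⟩ := hneg
    have hanti : AntitoneOn f (Icc x b) := by
      refine antitoneOn_of_hasDerivWithinAt_nonpos (convex_Icc x b)
        (hf.mono (Icc_subset_Icc_left hx.1)) (f' := f') ?_ ?_ <;> rw [interior_Icc]
      · exact fun y hy => (hf' y ⟨hx.1.trans_lt hy.1, hy.2⟩).hasDerivWithinAt
      · exact fun y hy => h s ⟨hs.1, hs.2.trans_le hx.2⟩ y ⟨hx.1.trans_lt hy.1, hy.2⟩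
          (hs.2.le.trans hy.1.le) hs_neg
    exact (min_le_right _ _).trans (hanti ⟨le_rfl, hx.2⟩ ⟨hx.2, le_rfl⟩ hx.2)
  · push Not at hneg
    have hmono : MonotoneOn f (Icc a x) := by
      refine monotoneOn_of_hasDerivWithinAt_nonneg (convex_Icc a x)
        (hf.mono (Icc_subset_Icc_right hx.2)) (f' := f') ?_ ?_ <;> rw [interior_Icc]
      · exact fun y hy => (hf' y ⟨hy.1, hy.2.trans_le hx.2⟩).hasDerivWithinAt
      · exact hneg
    exact (min_le_left _ _).trans (hmono ⟨le_rfl, hx.1⟩ ⟨hx.1, le_rfl⟩ hx.1)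

lemma NonposThenNonnegOn.nonnegThenNonposOn_of_hasDerivAt
    (h : NonposThenNonnegOn f'' (Ioo a b))
    (hf' : ∀ x ∈ Ioc a b, HasDerivAt f' (f'' x) x) (hb : f' b = 0) :
    NonnegThenNonposOn f' (Ioo a b) := by
  intro x hx y hy hxy hx_neg
  by_contra! hy_pos
  have hlt : x < y := lt_of_le_of_ne hxy (by rintro rfl; linarith)
  obtain ⟨ξ, hξ, hξ_slope⟩ := exists_hasDerivAt_eq_slope f' f'' hlt
    (fun z hz =>
      (hf' z ⟨hx.1.trans_le hz.1, hz.2.trans hy.2.le⟩).continuousAt.continuousWithinAt)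
    (fun z hz => hf' z ⟨hx.1.trans hz.1, (hz.2.trans hy.2).le⟩)
  have hξ_pos : 0 < f'' ξ := by
    rw [hξ_slope]; exact div_pos (by linarith) (by linarith)
  have hξI : ξ ∈ Ioo a b := ⟨hx.1.trans hξ.1, hξ.2.trans hy.2⟩
  have hmono : MonotoneOn f' (Icc y b) := by
    refine monotoneOn_of_hasDerivWithinAt_nonneg (convex_Icc y b)
      (fun z hz => (hf' z ⟨hy.1.trans_le hz.1, hz.2⟩).continuousAt.continuousWithinAt)
      (f' := f'') ?_ ?_ <;> rw [interior_Icc]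
    · exact fun z hz => (hf' z ⟨hy.1.trans hz.1, hz.2.le⟩).hasDerivWithinAt
    · exact fun z hz => h ξ hξI z ⟨hy.1.trans hz.1, hz.2⟩ (hξ.2.le.trans hz.1.le) hξ_pos
  have := hmono ⟨le_rfl, hy.2.le⟩ ⟨hy.2.le, le_rfl⟩ hy.2.le
  linarith

lemma NonposThenNonnegOn.nonneg_of_hasDerivAt (h : NonposThenNonnegOn f'' (Ioo a b))
    (hf : ContinuousOn f (Icc a b)) (hf' : ∀ x ∈ Ioo a b, HasDerivAt f (f' x) x)
    (hf'' : ∀ x ∈ Ioc a b, HasDerivAt f' (f'' x) x)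
    (ha : 0 ≤ f a) (hb : 0 ≤ f b) (hb' : f' b = 0) {x : ℝ} (hx : x ∈ Icc a b) : 0 ≤ f x :=
  (le_min ha hb).trans ((h.nonnegThenNonposOn_of_hasDerivAt hf'' hb').min_le hf hf' hx)

end SignChange

lemma binEnt_eq_binEntropy : binEnt = binEntropy := by
  funext x; simp [binEnt, binEntropy, log_inv]; ring

lemma log_four_eq_two_mul_log_two : log 4 = 2 * log 2 := by
  rw [show (4 : ℝ) = 2 ^ 2 by norm_num, log_pow, Nat.cast_ofNat]

lemma two_mul_le_log_one_add_sub_log_one_sub {t : ℝ} (ht₀ : 0 ≤ t) (ht₁ : t < 1) :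
    2 * t ≤ log (1 + t) - log (1 - t) := by
  have hs := hasSum_log_sub_log_of_abs_lt_one (x := t) (by rwa [abs_of_nonneg ht₀])
  simpa using le_hasSum hs 0 (fun k _ => by positivity)

lemma two_mul_one_sub_two_mul_le_log_one_sub_sub_log {x : ℝ} (hx₀ : 0 < x) (hx : x ≤ 1 / 2) :
    2 * (1 - 2 * x) ≤ log (1 - x) - log x := by
  have := two_mul_le_log_one_add_sub_log_one_sub (t := 1 - 2 * x) (by linarith) (by linarith)
  rwa [show 1 + (1 - 2 * x) = 2 * (1 - x) by ring, show 1 - (1 - 2 * x) = 2 * x by ring,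
    log_mul two_ne_zero (by linarith), log_mul two_ne_zero hx₀.ne', add_sub_add_left_eq_sub]
    at this

lemma hasDerivAt_log_one_sub_sub_log {x : ℝ} (hx₀ : x ≠ 0) (hx₁ : x ≠ 1) :
    HasDerivAt (fun y => log (1 - y) - log y) (-(x * (1 - x))⁻¹) x := by
  have h1 : 1 - x ≠ 0 := sub_ne_zero.2 hx₁.symm
  refine ((((hasDerivAt_id x).const_sub 1).log h1).sub (hasDerivAt_log hx₀)).congr_deriv ?_
  simp only [id]; field_simp; ring

lemma four_mul_log_two_mul_le_binEntropy {x : ℝ} (hx : x ∈ Icc (0 : ℝ) (1 / 2)) :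
    4 * log 2 * (x * (1 - x)) ≤ binEntropy x := by
  have hsign : NonposThenNonnegOn (fun y => 8 * log 2 - (y * (1 - y))⁻¹) (Ioo 0 (1 / 2)) := by
    intro s hs t ht hst hpos
    have : (t * (1 - t))⁻¹ ≤ (s * (1 - s))⁻¹ :=
      inv_anti₀ (by nlinarith [hs.1, hs.2]) (by nlinarith [hs.2, ht.2])
    simp only at hpos ⊢
    linarith
  have := hsign.nonneg_of_hasDerivAt (f := fun y => binEntropy y - 4 * log 2 * (y * (1 - y)))
    (f' := fun y => log (1 - y) - log y - 4 * log 2 * (1 - 2 * y)) (by fun_prop)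
    (fun y hy => ?_) (fun y hy => ?_) (by simp) ?_ (by norm_num) hx
  · simpa [sub_nonneg] using this
  · refine ((hasDerivAt_binEntropy hy.1.ne' (by linarith [hy.2])).sub
      (((hasDerivAt_id y).mul ((hasDerivAt_id y).const_sub 1)).const_mul
        (4 * log 2))).congr_deriv ?_
    simp only [id]; ring
  · refine ((hasDerivAt_log_one_sub_sub_log hy.1.ne' (by linarith [hy.2])).sub
      ((((hasDerivAt_id y).const_mul 2).const_sub 1).const_mul (4 * log 2))).congr_deriv ?_
    ring
  · rw [one_div 2, binEntropy_two_inv]; linarith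

lemma monotoneOn_mul_one_sub_mul_log_div :
    MonotoneOn (fun y => y * (1 - y) * (log (1 - y) - log y) / (1 - 2 * y)) (Ioo 0 (1 / 2)) := by
  have hderiv : ∀ y ∈ Ioo (0 : ℝ) (1 / 2), HasDerivAt
      (fun y => y * (1 - y) * (log (1 - y) - log y) / (1 - 2 * y))
      (((y ^ 2 + (1 - y) ^ 2) * (log (1 - y) - log y) - (1 - 2 * y)) / (1 - 2 * y) ^ 2) y := by
    intro y hy
    have h₀ : y ≠ 0 := hy.1.ne'
    have h₁ : 1 - y ≠ 0 := by linarith [hy.2]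
    have h₂ : 1 - 2 * y ≠ 0 := by linarith [hy.2]
    refine ((((hasDerivAt_id y).mul ((hasDerivAt_id y).const_sub 1)).mul
      (hasDerivAt_log_one_sub_sub_log hy.1.ne' (by linarith [hy.2]))).div
      (((hasDerivAt_id y).const_mul 2).const_sub 1) h₂).congr_deriv ?_
    simp only [id, Pi.mul_apply]
    field_simp
    ring
  refine monotoneOn_of_hasDerivWithinAt_nonneg (convex_Ioo 0 (1 / 2))
    (fun y hy => (hderiv y hy).continuousAt.continuousWithinAt)
    (fun y hy => (hderiv y (by rwa [interior_Ioo] at hy)).hasDerivWithinAt) fun y hy => ?_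
  rw [interior_Ioo] at hy
  have hL := two_mul_one_sub_two_mul_le_log_one_sub_sub_log hy.1 hy.2.le
  have : 0 ≤ 1 - 2 * y := by linarith [hy.2]
  refine div_nonneg ?_ (sq_nonneg _)
  -- `2 (y² + (1 - y)²) - 1 = (1 - 2y)²`, so the numerator is at least `(1 - 2y)³`
  nlinarith [mul_le_mul_of_nonneg_left hL (by positivity : 0 ≤ y ^ 2 + (1 - y) ^ 2),
      pow_nonneg this 3]

lemma nonposThenNonnegOn_mul_log_sub_mul_div {c d : ℝ} (hc : 0 ≤ c) :
    NonposThenNonnegOn (fun y => c * (log (1 - y) - log y) - d * ((1 - 2 * y) / (y * (1 - y))))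
      (Ioo 0 (1 / 2)) := by
  have hweight : ∀ y ∈ Ioo (0 : ℝ) (1 / 2), 0 < (1 - 2 * y) / (y * (1 - y)) := fun y hy =>
    div_pos (by linarith [hy.2]) (mul_pos hy.1 (by linarith [hy.2]))
  have hfactor : ∀ y ∈ Ioo (0 : ℝ) (1 / 2),
      c * (log (1 - y) - log y) - d * ((1 - 2 * y) / (y * (1 - y))) = (1 - 2 * y) / (y * (1 - y))
        * (c * (y * (1 - y) * (log (1 - y) - log y) / (1 - 2 * y)) - d) := by
    intro y hy
    have h₀ : y ≠ 0 := hy.1.ne'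
    have h₁ : 1 - y ≠ 0 := by linarith [hy.2]
    have h₂ : 1 - 2 * y ≠ 0 := by linarith [hy.2]
    have hcancel : (1 - 2 * y) / (y * (1 - y)) * (y * (1 - y) * (log (1 - y) - log y) / (1 - 2 * y))
        = log (1 - y) - log y := by
      field_simp
    linear_combination (-c) * hcancel
  intro s hs t ht hst hpos
  simp only [hfactor s hs] at hpos
  simp only [hfactor t ht]
  have := pos_of_mul_pos_right hpos (hweight s hs).le
  exact mul_nonneg (hweight t ht).le (by
    nlinarith [mul_le_mul_of_nonneg_left (monotoneOn_mul_one_sub_mul_log_div hs ht hst) hc])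

lemma one_sub_two_mul_mul_binEntropy_le {x : ℝ} (hx : x ∈ Icc (0 : ℝ) (1 / 2)) :
    (1 - 2 * x) * binEntropy x ≤ log 4 * (x * (1 - x)) * (log (1 - x) - log x) := by
  have hsign := nonposThenNonnegOn_mul_log_sub_mul_div (d := log 4 - 1)
    (by rw [log_four_eq_two_mul_log_two]; linarith [log_two_lt_d9] : 0 ≤ 4 - 2 * log 4)
  have := hsign.nonneg_of_hasDerivAt
    (f := fun y => log 4 * (y * (1 - y)) * (log (1 - y) - log y) - (1 - 2 * y) * binEntropy y)
    (f' := fun y => (log 4 - 1) * (1 - 2 * y) * (log (1 - y) - log y) + 2 * binEntropy y - log 4)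
    ?_ (fun y hy => ?_) (fun y hy => ?_) (by simp) (by norm_num) ?_ hx
  · simpa [sub_nonneg] using this
  · have : (fun y => log 4 * (y * (1 - y)) * (log (1 - y) - log y) - (1 - 2 * y) * binEntropy y)
        = fun y => log 4 * ((1 - y) * negMulLog y - y * negMulLog (1 - y))
          - (1 - 2 * y) * binEntropy y := by
      funext y; simp only [negMulLog]; ring
    rw [this]
    fun_prop
  · have h₀ : y ≠ 0 := hy.1.ne'
    have h₁ : y ≠ 1 := by linarith [hy.2]
    refine ((((hasDerivAt_id y).mul ((hasDerivAt_id y).const_sub 1)).const_mul (log 4)).mul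
      (hasDerivAt_log_one_sub_sub_log h₀ h₁) |>.sub
      ((((hasDerivAt_id y).const_mul 2).const_sub 1).mul
        (hasDerivAt_binEntropy h₀ h₁))).congr_deriv ?_
    have h₁' : 1 - y ≠ 0 := sub_ne_zero.2 h₁.symm
    simp only [id, Pi.mul_apply, binEntropy, log_inv]
    field_simp
    ring
  · have h₀ : y ≠ 0 := hy.1.ne'
    have h₁ : y ≠ 1 := by linarith [hy.2]
    refine (((((hasDerivAt_id y).const_mul 2).const_sub 1).const_mul (log 4 - 1)).mul
      (hasDerivAt_log_one_sub_sub_log h₀ h₁) |>.add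
      ((hasDerivAt_binEntropy h₀ h₁).const_mul 2) |>.sub_const (log 4)).congr_deriv ?_
    have h₁' : 1 - y ≠ 0 := sub_ne_zero.2 h₁.symm
    simp only [id]
    field_simp
    ring
  · rw [one_div 2, binEntropy_two_inv, log_four_eq_two_mul_log_two]; ring

lemma monotoneOn_log_binEntropy_sub_log_mul_one_sub_div :
    MonotoneOn (fun y => log (binEntropy y) - log (y * (1 - y)) / log 4) (Ioc 0 (1 / 2)) := by
  have hlog4 : 0 < log 4 := log_pos (by norm_num)
  have hderiv : ∀ y ∈ Ioc (0 : ℝ) (1 / 2),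
      HasDerivAt (fun y => log (binEntropy y) - log (y * (1 - y)) / log 4)
        ((log (1 - y) - log y) / binEntropy y - (1 - 2 * y) / (y * (1 - y)) / log 4) y := by
    intro y hy
    have h₁ : y ≠ 1 := by linarith [hy.2]
    refine ((hasDerivAt_binEntropy hy.1.ne' h₁).log
      (binEntropy_pos hy.1 (by linarith [hy.2])).ne' |>.sub
      ((((hasDerivAt_id y).mul ((hasDerivAt_id y).const_sub 1)).log
        (show y * (1 - y) ≠ 0 by nlinarith [hy.1, hy.2])).div_const (log 4))).congr_deriv ?_
    simp only [id, Pi.mul_apply]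
    ring
  refine monotoneOn_of_hasDerivWithinAt_nonneg (convex_Ioc 0 (1 / 2))
    (fun y hy => (hderiv y hy).continuousAt.continuousWithinAt)
    (fun y hy => (hderiv y (Ioo_subset_Ioc_self (by rwa [interior_Ioc] at hy))).hasDerivWithinAt)
    fun y hy => ?_
  rw [interior_Ioc] at hy
  have hh : 0 < binEntropy y := binEntropy_pos hy.1 (by linarith [hy.2])
  have hu : 0 < y * (1 - y) := mul_pos hy.1 (by linarith [hy.2])
  have key := one_sub_two_mul_mul_binEntropy_le ⟨hy.1.le, hy.2.le⟩
  rw [sub_nonneg, div_div, div_le_div_iff₀ (mul_pos hu hlog4) hh]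
  linarith

lemma binEntropy_le_exp_one_mul_log_two_mul_rpow {x : ℝ} (hx : x ∈ Icc (0 : ℝ) (1 / 2)) :
    binEntropy x ≤ exp 1 * log 2 * (x * (1 - x)) ^ (1 / log 4) := by
  rcases hx.1.eq_or_lt with rfl | hx₀
  · rw [zero_mul, zero_rpow (one_div_pos.2 (log_pos (by norm_num))).ne', binEntropy_zero, mul_zero]
  have hu : 0 < x * (1 - x) := mul_pos hx₀ (by linarith [hx.2])
  have hmono := monotoneOn_log_binEntropy_sub_log_mul_one_sub_div ⟨hx₀, hx.2⟩
    ⟨by norm_num, le_rfl⟩ hx.2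
  have hhalf :
      log (binEntropy (1 / 2)) - log (1 / 2 * (1 - 1 / 2)) / log 4 = log (log 2) + 1 := by
    rw [show (1 / 2 : ℝ) * (1 - 1 / 2) = 4⁻¹ by norm_num, log_inv, neg_div,
      div_self (log_pos (by norm_num : (1 : ℝ) < 4)).ne', one_div 2, binEntropy_two_inv,
      sub_neg_eq_add]
  calc binEntropy x = exp (log (binEntropy x)) :=
        (exp_log (binEntropy_pos hx₀ (by linarith [hx.2]))).symm
    _ ≤ exp (1 + log (log 2) + log (x * (1 - x)) * (1 / log 4)) := by
        rw [exp_le_exp, mul_one_div]; simp only at hmono; rw [hhalf] at hmono; linarith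
    _ = exp 1 * log 2 * (x * (1 - x)) ^ (1 / log 4) := by
        rw [exp_add, exp_add, exp_log (log_pos one_lt_two), ← rpow_def_of_pos hu]

theorem binEnt_sandwich (x : ℝ) (hx : x ∈ Set.Icc (0:ℝ) 1) :
    (4 * Real.log 2) * (x * (1 - x)) ≤ binEnt x ∧
    binEnt x ≤ (Real.exp 1 * Real.log 2) * (x * (1 - x)) ^ (1 / Real.log 4) := by
  rw [binEnt_eq_binEntropy]
  wlog hx₂ : x ≤ 1 / 2 generalizing x
  · have := this (1 - x) ⟨by linarith [hx.2], by linarith [hx.1]⟩ (by linarith)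
    rwa [binEntropy_one_sub, sub_sub_cancel, mul_comm (1 - x)] at this
  exact ⟨four_mul_log_two_mul_le_binEntropy ⟨hx.1, hx₂⟩,
    binEntropy_le_exp_one_mul_log_two_mul_rpow ⟨hx.1, hx₂⟩⟩
end

section
/- Let X and Y be independent random variables each distributed as ∑_{n=1}^∞ X_n/α^n with X_n i.i.d. uniform on {0, α−1} (the uniform measure on the ratio-α Cantor set, α > 2), and let F be the CDF of R = X − Y. Then for all r in [0,1], F(r) = (1/2) F(α r) + (1/4) F(α r − (α−1)) + (1/4) F(α r + (α−1)). -/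
/-!
Put `D = X - Y = ∑ (W (2n) - W (2n+1)) / α ^ (n+1)`. Splitting off the first two digits gives
`D = (W 0 - W 1 + D') / α` almost surely, where `D'` is the same series built from the shifted
sequence `(W (n+2))ₙ`. Since the law of an i.i.d. sequence is shift invariant, `D'` has the law
`ν` of `D`, and it is independent of `W 0` and `W 1`. Hence `ν` is the image under `x ↦ x / α`
of `β ∗ (-β) ∗ ν` with `β = ½ δ₀ + ½ δ_{α-1}`, and evaluating both sides on `Iic r` gives the
self-similarity of the distribution function.
-/

open MeasureTheory ProbabilityTheory Set

noncomputable def cantorSum (α : ℝ) (u : ℕ → ℝ) : ℝ := ∑' n, u n / α ^ (n + 1)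

noncomputable def cantorDiff (α : ℝ) (w : ℕ → ℝ) : ℝ :=
  cantorSum α (fun n => w (2 * n)) - cantorSum α (fun n => w (2 * n + 1))

lemma summable_div_pow_succ {α C : ℝ} (hα : 1 < α) {u : ℕ → ℝ} (hu : ∀ n, |u n| ≤ C) :
    Summable fun n => u n / α ^ (n + 1) := by
  have hα0 : 0 < α := by linarith
  have hgeom : Summable fun n : ℕ => C / α * α⁻¹ ^ n :=
    (summable_geometric_of_lt_one (by positivity) (inv_lt_one_of_one_lt₀ hα)).mul_left _
  refine Summable.of_norm_bounded hgeom fun n => ?_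
  rw [Real.norm_eq_abs, abs_div, abs_of_pos (pow_pos hα0 _)]
  calc |u n| / α ^ (n + 1) ≤ C / α ^ (n + 1) := by gcongr; exact hu n
    _ = C / α * α⁻¹ ^ n := by rw [inv_pow, pow_succ']; field_simp

lemma cantorSum_eq_div {α : ℝ} {u : ℕ → ℝ} (hu : Summable fun n => u n / α ^ (n + 1)) :
    cantorSum α u = (u 0 + cantorSum α fun n => u (n + 1)) / α := by
  rw [cantorSum, hu.tsum_eq_zero_add, cantorSum, add_div, ← tsum_div_const]
  simp [pow_succ, div_div]

@[fun_prop]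
lemma measurable_cantorDiff (α : ℝ) : Measurable (cantorDiff α) := by
  unfold cantorDiff cantorSum
  exact (Measurable.tsum fun n => by fun_prop).sub (Measurable.tsum fun n => by fun_prop)

lemma cantorDiff_eq_div {α C : ℝ} (hα : 1 < α) {w : ℕ → ℝ} (hw : ∀ n, |w n| ≤ C) :
    cantorDiff α w = (w 0 + (-w 1 + cantorDiff α fun n => w (n + 2))) / α := by
  rw [cantorDiff,
    cantorSum_eq_div (u := fun n => w (2 * n)) (summable_div_pow_succ hα fun n => hw _),
    cantorSum_eq_div (u := fun n => w (2 * n + 1)) (summable_div_pow_succ hα fun n => hw _),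
    cantorDiff]
  ring_nf

lemma ae_eq_or_eq_of_map_eq {Ω : Type*} [MeasurableSpace Ω] {μ : Measure Ω} {f : Ω → ℝ}
    (hf : Measurable f) {a b : ℝ} {p q : ENNReal}
    (h : μ.map f = p • Measure.dirac a + q • Measure.dirac b) :
    ∀ᵐ ω ∂μ, f ω = a ∨ f ω = b := by
  refine ae_of_ae_map (p := fun x => x = a ∨ x = b) hf.aemeasurable ?_
  rw [h, ae_iff]
  simp

lemma two_point_conv_apply_Iic (p q : ENNReal) (a b t : ℝ) (ρ : Measure ℝ) [SFinite ρ] :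
    ((p • Measure.dirac a + q • Measure.dirac b) ∗ ρ) (Iic t) =
      p * ρ (Iic (t - a)) + q * ρ (Iic (t - b)) := by
  rw [Measure.add_conv, Measure.conv_smul_left, Measure.conv_smul_left, Measure.dirac_conv,
    Measure.dirac_conv]
  simp [Measure.map_apply (measurable_const_add _) measurableSet_Iic, preimage_const_add_Iic]

namespace ProbabilityTheory

variable {Ω E : Type*} [MeasurableSpace Ω] [MeasurableSpace E] {μ : Measure Ω} {W : ℕ → Ω → E}

lemma iIndepFun.map_fun_shift_eq (hindep : iIndepFun W μ) (hmeas : ∀ n, Measurable (W n))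
    {β : Measure E} (hlaw : ∀ n, μ.map (W n) = β) (k : ℕ) :
    μ.map (fun ω n => W (n + k) ω) = μ.map (fun ω n => W n ω) := by
  rw [(hindep.precomp (add_left_injective k)).map_fun_eq_infinitePi_map fun n => hmeas _,
    hindep.map_fun_eq_infinitePi_map hmeas]
  simp only [hlaw]

lemma iIndepFun.indepFun_head_tail (hindep : iIndepFun W μ) (hmeas : ∀ n, Measurable (W n)) :
    IndepFun (W 0) (fun ω n => W (n + 1) ω) μ := by
  have hsplit := indep_iSup_of_disjoint (fun n => (hmeas n).comap_le) hindep
    (S := {0}) (T := {n | 1 ≤ n}) (by simp)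
  rw [IndepFun_iff_Indep]
  refine indep_of_indep_of_le_right (indep_of_indep_of_le_left hsplit ?_) ?_
  · exact le_iSup₂ (f := fun n (_ : n ∈ ({0} : Set ℕ)) => MeasurableSpace.comap (W n) _) 0 rfl
  · simp_rw [MeasurableSpace.pi, MeasurableSpace.comap_iSup, MeasurableSpace.comap_comp]
    exact iSup_le fun n =>
      le_iSup₂ (f := fun n (_ : n ∈ {n : ℕ | 1 ≤ n}) => MeasurableSpace.comap (W n) _)
        (n + 1) (by simp)

end ProbabilityTheory

lemma map_cantorDiff_eq_map_div_conv {Ω : Type*} [MeasurableSpace Ω] {μ : Measure Ω}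
    [IsFiniteMeasure μ] {α C : ℝ} (hα : 1 < α) {W : ℕ → Ω → ℝ}
    (hmeas : ∀ n, Measurable (W n)) (hindep : iIndepFun W μ) {β : Measure ℝ}
    (hlaw : ∀ n, μ.map (W n) = β) (hbdd : ∀ n, ∀ᵐ ω ∂μ, |W n ω| ≤ C) :
    μ.map (fun ω => cantorDiff α fun n => W n ω) =
      (β ∗ (β.map Neg.neg ∗ μ.map (fun ω => cantorDiff α fun n => W n ω))).map (· / α) := by
  have hshift : Measurable fun ω n => W (n + 2) ω := measurable_pi_lambda _ fun n => hmeas _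
  set S : Ω → ℝ := fun ω => cantorDiff α fun n => W (n + 2) ω
  have hS_meas : Measurable S := (measurable_cantorDiff α).comp (hshift)
  have hS_law : μ.map S = μ.map (fun ω => cantorDiff α fun n => W n ω) := by
    change μ.map (cantorDiff α ∘ fun ω n => W (n + 2) ω) =
      μ.map (cantorDiff α ∘ fun ω n => W n ω)
    rw [← Measure.map_map (measurable_cantorDiff α) (hshift),
      hindep.map_fun_shift_eq hmeas hlaw 2,
      Measure.map_map (measurable_cantorDiff α) (measurable_pi_lambda _ hmeas)]
  have hrec : (fun ω => cantorDiff α fun n => W n ω) =ᵐ[μ]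
      fun ω => (W 0 ω + (-W 1 ω + S ω)) / α := by
    filter_upwards [ae_all_iff.2 hbdd] with ω hω using cantorDiff_eq_div hα hω
  have hind₀ : IndepFun (W 0) (Neg.neg ∘ W 1 + S) μ :=
    (hindep.indepFun_head_tail hmeas).comp measurable_id
      (ψ := fun v : ℕ → ℝ => -v 0 + cantorDiff α fun n => v (n + 1)) (by fun_prop)
  have hind₁ : IndepFun (Neg.neg ∘ W 1) S μ :=
    ((hindep.precomp (add_left_injective 1)).indepFun_head_tail fun n => hmeas _).comp
      measurable_neg (measurable_cantorDiff α)
  calc μ.map (fun ω => cantorDiff α fun n => W n ω)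
      = μ.map (fun ω => (W 0 ω + (-W 1 ω + S ω)) / α) := Measure.map_congr hrec
    _ = (μ.map (W 0 + (Neg.neg ∘ W 1 + S))).map (· / α) :=
        (Measure.map_map (measurable_div_const α)
          ((hmeas 0).add ((measurable_neg.comp (hmeas 1)).add hS_meas))).symm
    _ = _ := by
        rw [hind₀.map_add_eq_map_conv_map (hmeas 0) (by fun_prop),
          hind₁.map_add_eq_map_conv_map (measurable_neg.comp (hmeas 1)) hS_meas, hlaw 0,
          ← Measure.map_map measurable_neg (hmeas 1), hlaw 1, hS_law]

lemma measureReal_Iic_of_eq_map_div_conv {α c : ℝ} (hα : 0 < α) {ν : Measure ℝ}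
    [IsFiniteMeasure ν] {β : Measure ℝ}
    (hβ : β = (1/2 : ENNReal) • Measure.dirac 0 + (1/2 : ENNReal) • Measure.dirac c)
    (hν : ν = (β ∗ (β.map Neg.neg ∗ ν)).map (· / α)) (t : ℝ) :
    ν.real (Iic t) = 1/2 * ν.real (Iic (α * t)) + 1/4 * ν.real (Iic (α * t - c)) +
      1/4 * ν.real (Iic (α * t + c)) := by
  have hpre : (fun x => x / α) ⁻¹' Iic t = Iic (α * t) := by
    ext x; simp [div_le_iff₀ hα, mul_comm]
  have hIic : ν (Iic t) =
      1/2 * (1/2 * ν (Iic (α * t)) + 1/2 * ν (Iic (α * t + c))) +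
        1/2 * (1/2 * ν (Iic (α * t - c)) + 1/2 * ν (Iic (α * t))) := by
    conv_lhs => rw [hν]
    rw [Measure.map_apply (measurable_div_const α) measurableSet_Iic, hpre, hβ,
      two_point_conv_apply_Iic, Measure.map_add _ _ measurable_neg, Measure.map_smul,
      Measure.map_smul, Measure.map_dirac' measurable_neg, Measure.map_dirac' measurable_neg,
      two_point_conv_apply_Iic, two_point_conv_apply_Iic]
    simp only [neg_zero, sub_zero, sub_neg_eq_add, sub_add_cancel]
  simp (disch := finiteness) only [measureReal_def, hIic, ENNReal.toReal_add, ENNReal.toReal_mul]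
  norm_num
  ring

theorem cantor_cdf_self_similarity
    {Ω : Type*} [MeasurableSpace Ω] (μ : Measure Ω) [IsProbabilityMeasure μ]
    (α : ℝ) (hα : 2 < α)
    (W : ℕ → Ω → ℝ) (hmeas : ∀ n, Measurable (W n))
    (hindep : iIndepFun (m := fun _ : ℕ => (inferInstance : MeasurableSpace ℝ)) W μ)
    (hlaw : ∀ n, μ.map (W n) =
      (1/2 : ENNReal) • Measure.dirac (0:ℝ) + (1/2 : ENNReal) • Measure.dirac (α - 1))
    (X Y : Ω → ℝ)
    (hX : ∀ ω, X ω = ∑' n : ℕ, W (2 * n) ω / α ^ (n + 1))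
    (hY : ∀ ω, Y ω = ∑' n : ℕ, W (2 * n + 1) ω / α ^ (n + 1))
    (F : ℝ → ℝ)
    (hF : ∀ r, F r = ((μ.map (fun ω => X ω - Y ω)) (Set.Iic r)).toReal) :
    ∀ r ∈ Set.Icc (0:ℝ) 1,
      F r = (1/2) * F (α * r) + (1/4) * F (α * r - (α - 1)) + (1/4) * F (α * r + (α - 1)) := by
  intro r _
  have hXY : (fun ω => X ω - Y ω) = fun ω => cantorDiff α fun n => W n ω :=
    funext fun ω => by rw [hX, hY]; rfl
  have hbdd (n : ℕ) : ∀ᵐ ω ∂μ, |W n ω| ≤ α - 1 :=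
    (ae_eq_or_eq_of_map_eq (hmeas n) (hlaw n)).mono fun ω h =>
      abs_le.2 (by rcases h with h | h <;> rw [h] <;> constructor <;> linarith)
  have hν := map_cantorDiff_eq_map_div_conv (by linarith) hmeas hindep hlaw hbdd
  rw [← hXY] at hν
  simp only [hF]
  exact measureReal_Iic_of_eq_map_div_conv (by linarith) rfl hν r
end

section
/- Let η > 0 and d > 0. Then ∫₀^∞ t^{d−1} h₂(exp(−t^η)) dt is finite and equals (1/η) Γ(d/η) ( d/η + ζ(d/η + 1) − ∑_{k=2}^∞ k^{−d/η}/(k−1) ), where Γ is the gamma function and ζ the Riemann zeta function. -/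
/-! With p = exp (-t ^ η) we have log p = -t ^ η, so h₂(p) = t ^ η p - (1 - p) log (1 - p), and
expanding the logarithm gives -(1 - p) log (1 - p) = ∑ₙ (p ^ (n + 1) - p ^ (n + 2)) / (n + 1), a
series of nonnegative functions of t. Against t ^ (d - 1) each exponential exp (-c t ^ η)
integrates to c ^ (-d/η) Γ(d/η) / η, and the first part to Γ(d/η + 1) / η. The resulting series
of integrals converges, which justifies exchanging sum and integral and also yields integrability;
the p ^ (n + 1) parts produce ζ(d/η + 1) and the p ^ (n + 2) parts the remaining sum. -/

open MeasureTheory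

open Real Set Filter

section SeriesIntegral

variable {α E : Type*} [MeasurableSpace α] {μ : Measure α} [NormedAddCommGroup E]
  {F : ℕ → α → E} {f : α → E}

theorem integrable_of_hasSum_of_summable_integral_norm (hF_int : ∀ n, Integrable (F n) μ)
    (hF_sum : Summable fun n ↦ ∫ a, ‖F n a‖ ∂μ) (hf : ∀ᵐ a ∂μ, HasSum (F · a) (f a)) :
    Integrable f μ := by
  refine ⟨aestronglyMeasurable_of_tendsto_ae atTop
    (fun n ↦ Finset.aestronglyMeasurable_fun_sum _ fun i _ ↦ (hF_int i).1)
    (hf.mono fun a ha ↦ ha.tendsto_sum_nat), ?_⟩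
  rw [hasFiniteIntegral_iff_enorm]
  calc ∫⁻ a, ‖f a‖ₑ ∂μ = ∫⁻ a, ‖∑' n, F n a‖ₑ ∂μ :=
        lintegral_congr_ae (hf.mono fun a ha ↦ by simp only [ha.tsum_eq])
    _ ≤ ∫⁻ a, ∑' n, ‖F n a‖ₑ ∂μ := lintegral_mono fun _ ↦ enorm_tsum_le_tsum_enorm
    _ = ∑' n, ∫⁻ a, ‖F n a‖ₑ ∂μ := lintegral_tsum fun n ↦ (hF_int n).1.enorm
    _ = ENNReal.ofReal (∑' n, ∫ a, ‖F n a‖ ∂μ) := by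
        rw [ENNReal.ofReal_tsum_of_nonneg (fun n ↦ integral_nonneg fun _ ↦ norm_nonneg _) hF_sum]
        simp_rw [ofReal_integral_norm_eq_lintegral_enorm (hF_int _)]
    _ < ⊤ := ENNReal.ofReal_lt_top

theorem hasSum_integral_of_hasSum_of_summable_integral_norm [NormedSpace ℝ E]
    (hF_int : ∀ n, Integrable (F n) μ) (hF_sum : Summable fun n ↦ ∫ a, ‖F n a‖ ∂μ)
    (hf : ∀ᵐ a ∂μ, HasSum (F · a) (f a)) :
    HasSum (fun n ↦ ∫ a, F n a ∂μ) (∫ a, f a ∂μ) := by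
  rw [integral_congr_ae (hf.mono fun a ha ↦ ha.tsum_eq.symm)]
  exact hasSum_integral_of_summable_integral_norm hF_int hF_sum

end SeriesIntegral

theorem hasSum_neg_one_sub_mul_log_one_sub {x : ℝ} (hx : |x| < 1) :
    HasSum (fun n : ℕ ↦ (x ^ (n + 1) - x ^ (n + 2)) / ((n : ℝ) + 1))
      (-((1 - x) * log (1 - x))) := by
  rw [← mul_neg]
  exact ((hasSum_pow_div_log_of_abs_lt_one hx).mul_left (1 - x)).congr_fun fun n ↦ by ring

theorem hasSum_binEnt_exp_neg {s : ℝ} (hs : 0 < s) :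
    HasSum (fun n : ℕ ↦ (exp (-((n : ℝ) + 1) * s) - exp (-((n : ℝ) + 2) * s)) / ((n : ℝ) + 1))
      (binEnt (exp (-s)) - s * exp (-s)) := by
  have hx : |exp (-s)| < 1 := by
    rw [abs_of_pos (exp_pos _), exp_lt_one_iff]; linarith
  have hpow (m : ℕ) : exp (-s) ^ m = exp (-(m * s)) := by rw [← exp_nat_mul]; ring_nf
  convert hasSum_neg_one_sub_mul_log_one_sub hx using 1
  · ext n; rw [hpow, hpow]; push_cast; ring_nf
  · rw [binEnt, log_exp]; ring

theorem hasSum_rpow_neg_sub_div {r : ℝ} (hr : 0 < r) :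
    HasSum (fun n : ℕ ↦ (((n : ℝ) + 1) ^ (-r) - ((n : ℝ) + 2) ^ (-r)) / ((n : ℝ) + 1))
      ((∑' n : ℕ, 1 / ((n : ℝ) + 1) ^ (r + 1)) -
        ∑' n : ℕ, ((n : ℝ) + 2) ^ (-r) / ((n : ℝ) + 1)) := by
  have hzeta : Summable fun n : ℕ ↦ 1 / ((n : ℝ) + 1) ^ (r + 1) := by
    refine ((summable_one_div_nat_add_rpow 1 (r + 1)).mpr (by linarith)).congr fun n ↦ ?_
    rw [abs_of_pos (by positivity)]
  have hdiv (n : ℕ) : ((n : ℝ) + 1) ^ (-r) / ((n : ℝ) + 1) = 1 / ((n : ℝ) + 1) ^ (r + 1) := by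
    rw [rpow_add (by positivity), rpow_one, rpow_neg (by positivity)]
    field_simp
  have hshift : Summable fun n : ℕ ↦ ((n : ℝ) + 2) ^ (-r) / ((n : ℝ) + 1) := by
    refine hzeta.of_nonneg_of_le (fun n ↦ by positivity) fun n ↦ ?_
    rw [← hdiv]
    gcongr ?_ / _
    exact rpow_le_rpow_of_nonpos (by positivity) (by linarith) (by linarith)
  simp_rw [sub_div, hdiv]
  exact hzeta.hasSum.sub hshift.hasSum

section EntropySeries

variable {η d : ℝ}

noncomputable def entropySeriesTerm (η d : ℝ) (n : ℕ) (t : ℝ) : ℝ :=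
  (t ^ (d - 1) * exp (-((n : ℝ) + 1) * t ^ η) - t ^ (d - 1) * exp (-((n : ℝ) + 2) * t ^ η)) /
    ((n : ℝ) + 1)

theorem entropySeriesTerm_nonneg (n : ℕ) {t : ℝ} (ht : 0 ≤ t) : 0 ≤ entropySeriesTerm η d n t := by
  have hexp : exp (-((n : ℝ) + 2) * t ^ η) ≤ exp (-((n : ℝ) + 1) * t ^ η) :=
    exp_le_exp.mpr (by nlinarith [rpow_nonneg ht η])
  exact div_nonneg (sub_nonneg.mpr (mul_le_mul_of_nonneg_left hexp (rpow_nonneg ht _)))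
    (by positivity)

theorem hasSum_entropySeriesTerm {t : ℝ} (ht : 0 < t) :
    HasSum (entropySeriesTerm η d · t)
      (t ^ (d - 1) * binEnt (exp (-(t ^ η))) - t ^ (d + η - 1) * exp (-(t ^ η))) := by
  have hsplit : t ^ (d + η - 1) = t ^ (d - 1) * t ^ η := by
    rw [← rpow_add ht]; ring_nf
  rw [hsplit, mul_assoc, ← mul_sub]
  exact ((hasSum_binEnt_exp_neg (rpow_pos_of_pos ht η)).mul_left _).congr_fun fun n ↦ by
    rw [entropySeriesTerm]; ring

theorem integrableOn_entropySeriesTerm (hη : 0 < η) (hd : 0 < d) (n : ℕ) :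
    IntegrableOn (entropySeriesTerm η d n) (Ioi 0) :=
  ((integrableOn_rpow_mul_exp_neg_mul_rpow (by linarith) hη (by positivity)).sub
    (integrableOn_rpow_mul_exp_neg_mul_rpow (by linarith) hη (by positivity))).div_const _

theorem integral_rpow_sub_one_mul_exp_neg_mul_rpow (hη : 0 < η) (hd : 0 < d) {c : ℝ}
    (hc : 0 < c) :
    ∫ t in Ioi 0, t ^ (d - 1) * exp (-c * t ^ η) = c ^ (-(d / η)) * (1 / η * Gamma (d / η)) := by
  rw [integral_rpow_mul_exp_neg_mul_rpow hη (by linarith) hc, sub_add_cancel, neg_div, mul_assoc]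

theorem integral_entropySeriesTerm (hη : 0 < η) (hd : 0 < d) (n : ℕ) :
    ∫ t in Ioi 0, entropySeriesTerm η d n t =
      1 / η * Gamma (d / η) *
        ((((n : ℝ) + 1) ^ (-(d / η)) - ((n : ℝ) + 2) ^ (-(d / η))) / ((n : ℝ) + 1)) := by
  unfold entropySeriesTerm
  rw [integral_div, integral_sub
    (integrableOn_rpow_mul_exp_neg_mul_rpow (by linarith) hη (by positivity))
    (integrableOn_rpow_mul_exp_neg_mul_rpow (by linarith) hη (by positivity)),
    integral_rpow_sub_one_mul_exp_neg_mul_rpow hη hd (by positivity),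
    integral_rpow_sub_one_mul_exp_neg_mul_rpow hη hd (by positivity)]
  ring

theorem integral_rpow_add_sub_one_mul_exp_neg_rpow (hη : 0 < η) (hd : 0 < d) :
    ∫ t in Ioi 0, t ^ (d + η - 1) * exp (-(t ^ η)) = 1 / η * Gamma (d / η) * (d / η) := by
  rw [integral_rpow_mul_exp_neg_rpow hη (by linarith),
    show (d + η - 1 + 1) / η = d / η + 1 by field_simp; ring, Gamma_add_one (by positivity)]
  ring

end EntropySeries

theorem rayleigh_entropy_integral_eval (η d : ℝ) (hη : 0 < η) (hd : 0 < d) :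
    IntegrableOn (fun t : ℝ => t ^ (d - 1) * binEnt (Real.exp (-(t ^ η)))) (Set.Ioi 0) ∧
    ∫ t in Set.Ioi (0:ℝ), t ^ (d - 1) * binEnt (Real.exp (-(t ^ η))) =
      (1 / η) * Real.Gamma (d / η) *
        (d / η + (∑' n : ℕ, 1 / ((n : ℝ) + 1) ^ (d / η + 1))
          - ∑' k : ℕ, ((k : ℝ) + 2) ^ (-(d / η)) / ((k : ℝ) + 1)) := by
  set g₀ : ℝ → ℝ := fun t ↦ t ^ (d + η - 1) * exp (-(t ^ η))
  have hseries := (hasSum_rpow_neg_sub_div (div_pos hd hη)).mul_left (1 / η * Gamma (d / η))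
  have hg₀ : IntegrableOn g₀ (Ioi 0) := by
    simpa using integrableOn_rpow_mul_exp_neg_mul_rpow (by linarith) hη one_pos
  have hF_lim : ∀ᵐ t ∂volume.restrict (Ioi 0), HasSum (entropySeriesTerm η d · t)
      (t ^ (d - 1) * binEnt (exp (-(t ^ η))) - g₀ t) :=
    ae_restrict_of_forall_mem measurableSet_Ioi fun _ ht ↦ hasSum_entropySeriesTerm ht
  have hF_sum : Summable fun n ↦ ∫ t in Ioi 0, ‖entropySeriesTerm η d n t‖ := by
    have hnorm (n : ℕ) : ∫ t in Ioi 0, ‖entropySeriesTerm η d n t‖ =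
        ∫ t in Ioi 0, entropySeriesTerm η d n t :=
      setIntegral_congr_fun measurableSet_Ioi fun t ht ↦
        norm_of_nonneg (entropySeriesTerm_nonneg n (le_of_lt ht))
    simp_rw [hnorm, integral_entropySeriesTerm hη hd]
    exact hseries.summable
  have hdiff := integrable_of_hasSum_of_summable_integral_norm
    (integrableOn_entropySeriesTerm hη hd) hF_sum hF_lim
  have hsum := hasSum_integral_of_hasSum_of_summable_integral_norm
    (integrableOn_entropySeriesTerm hη hd) hF_sum hF_lim
  simp_rw [integral_entropySeriesTerm hη hd] at hsum
  refine ⟨(hdiff.add hg₀).congr (ae_of_all _ fun t ↦ sub_add_cancel _ (g₀ t)), ?_⟩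
  calc ∫ t in Ioi 0, t ^ (d - 1) * binEnt (exp (-(t ^ η)))
      = (∫ t in Ioi 0, g₀ t) + ∫ t in Ioi 0, (t ^ (d - 1) * binEnt (exp (-(t ^ η))) - g₀ t) := by
        rw [← integral_add hg₀ hdiff]; simp only [add_sub_cancel]
    _ = _ := by
        rw [integral_rpow_add_sub_one_mul_exp_neg_rpow hη hd,
          hsum.unique hseries]
        ring
end

section
/- Let η > 0 and let R be a bounded nonnegative random variable with R ≤ D almost surely, D > 0. Then as r₀ → ∞, E[h₂(exp(−(R/r₀)^η))] = (1 + η log r₀)/r₀^η · E[R^η] − (η/r₀^η)·E[R^η log R] + O(r₀^{−2η} log r₀). -/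
open MeasureTheory

/-!
Put `t = (R / r₀) ^ η`, which lies in `(0, 1]` once `r₀ ≥ D`, and `u = 1 - exp (-t)`. Then
`h₂ (exp (-t)) = t exp (-t) - u log u`, and since `t - t² ≤ u ≤ t` this differs from
`t - t log t` by at most `2 t² (1 - log t)`. In terms of `R`, `t - t log t` is exactly the main
term of the expansion, while the error is `O(r₀^(-2η) log r₀)` uniformly in `R ≤ D`, because
`s ^ (2η) log s` is bounded below on `(0, D]`. Integrating the pointwise bound gives the claim.
-/

open Real

lemma measurable_binEnt : Measurable binEnt := by
  unfold binEnt
  fun_prop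

lemma rpow_mul_neg_log_le {s a : ℝ} (hs : 0 < s) (ha : 0 < a) : s ^ a * -log s ≤ 1 / a := by
  have h := log_le_rpow_div (inv_nonneg.2 hs.le) ha
  rw [log_inv, inv_rpow hs.le] at h
  calc s ^ a * -log s ≤ s ^ a * ((s ^ a)⁻¹ / a) := by gcongr
    _ = 1 / a := by field_simp [(rpow_pos_of_pos hs a).ne']

lemma abs_rpow_mul_log_le {η D s : ℝ} (hη : 0 < η) (hs : 0 ≤ s) (hsD : s ≤ D) :
    |s ^ η * log s| ≤ 1 / η + D ^ η * |log D| := by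
  have hD : 0 ≤ D ^ η * |log D| := mul_nonneg (rpow_nonneg (hs.trans hsD) η) (abs_nonneg _)
  rcases hs.eq_or_lt with rfl | hs
  · simp only [log_zero, mul_zero, abs_zero]
    positivity
  rcases le_or_gt s 1 with hs1 | hs1
  · have hlog : log s ≤ 0 := log_nonpos hs.le hs1
    rw [abs_of_nonpos (mul_nonpos_of_nonneg_of_nonpos (by positivity) hlog), ← mul_neg]
    linarith [rpow_mul_neg_log_le hs hη]
  · have hlog : 0 ≤ log s := log_nonneg hs1.le
    rw [abs_of_nonneg (by positivity)]
    calc s ^ η * log s ≤ D ^ η * |log D| :=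
          mul_le_mul (rpow_le_rpow hs.le hsD hη.le) ((log_le_log hs hsD).trans (le_abs_self _))
            hlog (rpow_nonneg (hs.le.trans hsD) η)
      _ ≤ 1 / η + D ^ η * |log D| := le_add_of_nonneg_left (by positivity)

lemma abs_binEnt_exp_neg_sub_le {t : ℝ} (ht : 0 < t) (ht1 : t ≤ 1) :
    |binEnt (exp (-t)) - (t - t * log t)| ≤ 2 * t ^ 2 * (1 - log t) := by
  obtain ⟨u, hu⟩ : ∃ u, exp (-t) = 1 - u := ⟨1 - exp (-t), by ring⟩
  have hu_pos : 0 < u := by linarith [exp_lt_one_iff.2 (neg_neg_of_pos ht)]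
  have hu_le : u ≤ t := by linarith [add_one_le_exp (-t)]
  have hu_ge : t - t ^ 2 ≤ u := by
    have : exp (-t) * exp t = 1 := by rw [← exp_add]; simp
    nlinarith [add_one_le_exp t, exp_pos t]
  have hlog_t : log t ≤ 0 := log_nonpos ht.le ht1
  have hsplit : binEnt (exp (-t)) - (t - t * log t)
      = -(t * u) + (t - u) * log t + u * log (t / u) := by
    rw [log_div ht.ne' hu_pos.ne']
    simp only [binEnt, log_exp]
    rw [hu, sub_sub_cancel]
    ring
  have h₁ : t * u ≤ t ^ 2 := by nlinarith
  have h₂ : (t - u) * -log t ≤ t ^ 2 * -log t := by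
    gcongr
    · linarith
    · linarith
  have h₃ : 0 ≤ u * log (t / u) := mul_nonneg hu_pos.le (log_nonneg ((one_le_div hu_pos).2 hu_le))
  have h₄ : u * log (t / u) ≤ t - u := by
    calc u * log (t / u) ≤ u * (t / u - 1) := by gcongr; exact log_le_sub_one_of_pos (by positivity)
      _ = t - u := by field_simp
  have h₅ : 0 ≤ (t - u) * -log t := mul_nonneg (by linarith) (by linarith)
  rw [hsplit, abs_le]
  constructor <;> nlinarith

lemma abs_binEnt_exp_neg_rpow_div_sub_le {η D r s : ℝ} (hη : 0 < η) (hr : exp 1 ≤ r) (hDr : D ≤ r)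
    (hs : 0 ≤ s) (hsD : s ≤ D) :
    |binEnt (exp (-((s / r) ^ η)))
        - ((1 + η * log r) / r ^ η * s ^ η - η / r ^ η * (s ^ η * log s))|
      ≤ (2 * (1 + η) * D ^ (2 * η) + 1) * r ^ (-(2 * η)) * log r := by
  have hr0 : 0 < r := (exp_pos 1).trans_le hr
  have hlog_r : 1 ≤ log r := (le_log_iff_exp_le hr0).2 hr
  have hD : 0 ≤ D := hs.trans hsD
  rcases hs.eq_or_lt with rfl | hs
  · simp only [zero_div, zero_rpow hη.ne', neg_zero, exp_zero, binEnt, log_one, log_zero]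
    norm_num
    positivity
  set t := (s / r) ^ η with ht
  have ht_pos : 0 < t := by positivity
  have ht_le : t ≤ 1 := rpow_le_one (by positivity) ((div_le_one hr0).2 (hsD.trans hDr)) hη.le
  have hlog_t : log t = η * log s - η * log r := by
    rw [ht, log_rpow (by positivity), log_div hs.ne' hr0.ne']
    ring
  have hexpansion : t - t * log t
      = (1 + η * log r) / r ^ η * s ^ η - η / r ^ η * (s ^ η * log s) := by
    rw [hlog_t, ht, div_rpow hs.le hr0.le]
    ring
  have ht_sq : t ^ 2 = s ^ (2 * η) * r ^ (-(2 * η)) := by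
    rw [ht, ← rpow_natCast, ← rpow_mul (by positivity), div_rpow hs.le hr0.le, rpow_neg hr0.le]
    push_cast
    ring_nf
  have hs_le : s ^ (2 * η) ≤ D ^ (2 * η) := rpow_le_rpow hs.le hsD (by positivity)
  have hs_log : 2 * η * (s ^ (2 * η) * -log s) ≤ 1 := by
    have := rpow_mul_neg_log_le hs (by positivity : 0 < 2 * η)
    rw [le_div_iff₀ (by positivity)] at this
    linarith
  rw [← hexpansion]
  refine (abs_binEnt_exp_neg_sub_le ht_pos ht_le).trans ?_
  rw [ht_sq, hlog_t]
  calc 2 * (s ^ (2 * η) * r ^ (-(2 * η))) * (1 - (η * log s - η * log r))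
      = r ^ (-(2 * η)) * (2 * s ^ (2 * η) * (1 + η * log r) + 2 * η * (s ^ (2 * η) * -log s)) := by
        ring
    _ ≤ r ^ (-(2 * η)) * (2 * D ^ (2 * η) * ((1 + η) * log r) + log r) := by
        gcongr
        · nlinarith
        · linarith
    _ = _ := by ring

lemma integrable_comp_of_abs_le {Ω : Type*} [MeasurableSpace Ω] {μ : Measure Ω} [IsFiniteMeasure μ]
    {f : ℝ → ℝ} {R : Ω → ℝ} {D M : ℝ} (hf : Measurable f) (hR : Measurable R)
    (hR0 : ∀ ω, 0 ≤ R ω) (hRD : ∀ᵐ ω ∂μ, R ω ≤ D) (hfM : ∀ s, 0 ≤ s → s ≤ D → |f s| ≤ M) :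
    Integrable (fun ω => f (R ω)) μ :=
  .of_bound (hf.comp hR).aestronglyMeasurable M (hRD.mono fun ω hω => hfM _ (hR0 ω) hω)

lemma abs_integral_sub_le_of_ae_abs_sub_le {Ω : Type*} [MeasurableSpace Ω] {μ : Measure Ω}
    [IsProbabilityMeasure μ] {F G : Ω → ℝ} {C : ℝ} (hF : AEStronglyMeasurable F μ)
    (hG : Integrable G μ) (hFG : ∀ᵐ ω ∂μ, |F ω - G ω| ≤ C) :
    |∫ ω, F ω ∂μ - ∫ ω, G ω ∂μ| ≤ C := by
  have hF_int : Integrable F μ := by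
    simpa using (Integrable.of_bound (hF.sub hG.1) C hFG).add hG
  rw [← integral_sub hF_int hG]
  simpa using norm_integral_le_of_norm_le_const (f := fun ω => F ω - G ω) hFG

theorem large_r0_entropy_expansion_general
    {Ω : Type*} [MeasurableSpace Ω] (μ : Measure Ω) [IsProbabilityMeasure μ]
    (η D : ℝ) (hη : 0 < η)
    (R : Ω → ℝ) (hR : Measurable R) (hR0 : ∀ ω, 0 ≤ R ω)
    (hRD : ∀ᵐ ω ∂μ, R ω ≤ D) :
    ∃ C : ℝ, ∃ r₁ : ℝ, 1 < r₁ ∧ ∀ r₀ : ℝ, r₁ ≤ r₀ →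
      |(∫ ω, binEnt (Real.exp (-((R ω / r₀) ^ η))) ∂μ)
          - ((1 + η * Real.log r₀) / r₀ ^ η * (∫ ω, R ω ^ η ∂μ)
              - η / r₀ ^ η * ∫ ω, R ω ^ η * Real.log (R ω) ∂μ)|
        ≤ C * r₀ ^ (-(2 * η)) * Real.log r₀ := by
  refine ⟨2 * (1 + η) * D ^ (2 * η) + 1, max (exp 1) D,
    (one_lt_exp_iff.2 one_pos).trans_le (le_max_left _ _), fun r₀ hr₀ => ?_⟩
  have hint₁ : Integrable (fun ω => R ω ^ η) μ :=
    integrable_comp_of_abs_le (f := (· ^ η)) (by fun_prop) hR hR0 hRD fun s hs hsD => by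
      rw [abs_of_nonneg (rpow_nonneg hs η)]
      exact rpow_le_rpow hs hsD hη.le
  have hint₂ : Integrable (fun ω => R ω ^ η * log (R ω)) μ :=
    integrable_comp_of_abs_le (by fun_prop) hR hR0 hRD fun s hs hsD => abs_rpow_mul_log_le hη hs hsD
  rw [← integral_const_mul, ← integral_const_mul,
    ← integral_sub (hint₁.const_mul _) (hint₂.const_mul _)]
  refine abs_integral_sub_le_of_ae_abs_sub_le (measurable_binEnt.comp (by fun_prop)).aestronglyMeasurable
    ((hint₁.const_mul _).sub (hint₂.const_mul _)) ?_
  filter_upwards [hRD] with ω hω using abs_binEnt_exp_neg_rpow_div_sub_le hη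
    ((le_max_left _ _).trans hr₀) ((le_max_right _ _).trans hr₀) (hR0 ω) hω

theorem large_r0_entropy_expansion
    {Ω : Type*} [MeasurableSpace Ω] (μ : Measure Ω) [IsProbabilityMeasure μ]
    (η D : ℝ) (hη : 0 < η) (hD : 0 < D)
    (R : Ω → ℝ) (hR : Measurable R) (hR0 : ∀ ω, 0 ≤ R ω)
    (hRD : ∀ᵐ ω ∂μ, R ω ≤ D) :
    ∃ C : ℝ, ∃ r₁ : ℝ, 1 < r₁ ∧ ∀ r₀ : ℝ, r₁ ≤ r₀ →
      |(∫ ω, binEnt (Real.exp (-((R ω / r₀) ^ η))) ∂μ)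
          - ((1 + η * Real.log r₀) / r₀ ^ η * (∫ ω, R ω ^ η ∂μ)
              - η / r₀ ^ η * ∫ ω, R ω ^ η * Real.log (R ω) ∂μ)|
        ≤ C * r₀ ^ (-(2 * η)) * Real.log r₀ :=
  large_r0_entropy_expansion_general μ η D hη R hR hR0 hRD
end
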